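/- In the group G = ⟨a, b | a^8 = b^3 = (ab)^2 = (a^2b^2)^3 = (a^4b^2)^3 = 1⟩, the element a has order exactly 8 and b has order exactly 3. -/

import Mathlib

def octaRels : Set (FreeGroup (Fin 2)) :=
  { (FreeGroup.of 0) ^ 8,
    (FreeGroup.of 1) ^ 3,
    (FreeGroup.of 0 * FreeGroup.of 1) ^ 2,
    ((FreeGroup.of 0) ^ 2 * (FreeGroup.of 1) ^ 2) ^ 3,
    ((FreeGroup.of 0) ^ 4 * (FreeGroup.of 1) ^ 2) ^ 3 }

/-! Both orders are bounded above by the relations `a⁸ = b³ = 1`, and bounded below by a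
permutation representation of degree 12 of the group, in which the images of `a` and `b`
have orders 8 and 3. -/

theorem orderOf_eq_of_pow_eq_one_of_orderOf_map {G H : Type*} [Monoid G] [Monoid H]
    (f : G →* H) {x : G} {n : ℕ} (hx : x ^ n = 1) (hfx : orderOf (f x) = n) :
    orderOf x = n :=
  Nat.dvd_antisymm (orderOf_dvd_of_pow_eq_one hx) (hfx ▸ orderOf_map_dvd f x)

namespace OctaGroup

/-- `(0 1 2 3 4 5 6 7)(8 9 10 11)` -/
def permA : Equiv.Perm (Fin 12) :=
  ⟨![1, 2, 3, 4, 5, 6, 7, 0, 9, 10, 11, 8], ![7, 0, 1, 2, 3, 4, 5, 6, 11, 8, 9, 10],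
    by decide, by decide⟩

/-- `(0 7 8)(1 11 2)(3 10 4)(5 9 6)` -/
def permB : Equiv.Perm (Fin 12) :=
  ⟨![7, 11, 1, 10, 3, 9, 5, 8, 0, 6, 4, 2], ![8, 2, 11, 4, 10, 6, 9, 0, 7, 5, 3, 1],
    by decide, by decide⟩

theorem lift_perm_rels : ∀ r ∈ octaRels, FreeGroup.lift ![permA, permB] r = 1 := by
  rintro r (rfl | rfl | rfl | rfl | rfl) <;>
    simp only [map_pow, map_mul, FreeGroup.lift_apply_of] <;> decide

def toPerm : PresentedGroup octaRels →* Equiv.Perm (Fin 12) :=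
  PresentedGroup.toGroup lift_perm_rels

theorem orderOf_permA : orderOf permA = 8 :=
  orderOf_eq_prime_pow (p := 2) (n := 2) (by decide) (by decide)

theorem orderOf_permB : orderOf permB = 3 :=
  orderOf_eq_prime (p := 3) (by decide) (by decide)

end OctaGroup

/-- In `G = ⟨a, b | a⁸ = b³ = (ab)² = (a²b²)³ = (a⁴b²)³ = 1⟩`, `a` has order
exactly 8 and `b` has order exactly 3. -/
theorem octaGroup_orderOf_generators :
    orderOf (PresentedGroup.of (rels := octaRels) 0) = 8 ∧
    orderOf (PresentedGroup.of (rels := octaRels) 1) = 3 :=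
  ⟨orderOf_eq_of_pow_eq_one_of_orderOf_map OctaGroup.toPerm
      (PresentedGroup.one_of_mem (by simp [octaRels]))
      (by rw [OctaGroup.toPerm, PresentedGroup.toGroup.of]; exact OctaGroup.orderOf_permA),
    orderOf_eq_of_pow_eq_one_of_orderOf_map OctaGroup.toPerm
      (PresentedGroup.one_of_mem (by simp [octaRels]))
      (by rw [OctaGroup.toPerm, PresentedGroup.toGroup.of]; exact OctaGroup.orderOf_permB)⟩
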